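/- Let B ∈ ℝ^{m×n} be a NAE3SAT clause matrix, let n' ≤ n, and let A' ∈ ℝ^{(m+3n+2n')×(3n+n')} be the block matrix whose first m+3n rows are [A | 0], where A has blocks [⅓B ⅓B ⅓B], [I_n I_n −I_n], [I_n −I_n I_n], [−I_n I_n I_n] from top to bottom; whose next n' rows are [⅔I_{n'} 0 | ⅔I_{n'} 0 | ⅔I_{n'} 0 | −2I_{n'}]; and whose last n' rows are [0_{n'×3n} | (8/3)I_{n'}]. If lindisc(A') < 3/2, then for every ψ_A ∈ {0,1}^{n'} there exists ψ ∈ {0,1}ⁿ with ψᵢ = (ψ_A)ᵢ for all i ∈ [n'] such that ψ NAE-satisfies B, i.e. ‖B((1/2)·1 − ψ)‖_∞ ≤ 1/2. -/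

import Mathlib

/-- The block matrix `A` with row blocks `[⅓B ⅓B ⅓B]`, `[I I -I]`, `[I -I I]`, `[-I I I]`. -/
noncomputable def Amat {m n : ℕ} (B : Matrix (Fin m) (Fin n) ℝ) :
    Matrix (Fin m ⊕ (Fin n ⊕ Fin n ⊕ Fin n)) (Fin n ⊕ Fin n ⊕ Fin n) ℝ :=
  Matrix.of fun r c =>
    match r with
    | Sum.inl j => (1 / 3) * B j (Sum.elim id (Sum.elim id id) c)
    | Sum.inr (Sum.inl k) =>
        Sum.elim (fun i => if k = i then (1 : ℝ) else 0)
          (Sum.elim (fun i => if k = i then (1 : ℝ) else 0)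
            (fun i => if k = i then (-1 : ℝ) else 0)) c
    | Sum.inr (Sum.inr (Sum.inl k)) =>
        Sum.elim (fun i => if k = i then (1 : ℝ) else 0)
          (Sum.elim (fun i => if k = i then (-1 : ℝ) else 0)
            (fun i => if k = i then (1 : ℝ) else 0)) c
    | Sum.inr (Sum.inr (Sum.inr k)) =>
        Sum.elim (fun i => if k = i then (-1 : ℝ) else 0)
          (Sum.elim (fun i => if k = i then (1 : ℝ) else 0)
            (fun i => if k = i then (1 : ℝ) else 0)) c

/-- `B` is a NAE3SAT clause matrix: each row is `b₁e^{i₁} + b₂e^{i₂} + b₃e^{i₃}`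
with signs `b₁,b₂,b₃ ∈ {-1,1}`. -/
def IsNAEClauseMatrix {m n : ℕ} (B : Matrix (Fin m) (Fin n) ℝ) : Prop :=
  ∃ (i1 i2 i3 : Fin m → Fin n) (b1 b2 b3 : Fin m → ℝ),
    (∀ j, (b1 j = -1 ∨ b1 j = 1) ∧ (b2 j = -1 ∨ b2 j = 1) ∧ (b3 j = -1 ∨ b3 j = 1)) ∧
    (∀ j i, B j i = (if i1 j = i then b1 j else 0) + (if i2 j = i then b2 j else 0) +
      (if i3 j = i then b3 j else 0))

/-- `ψ ∈ {0,1}ⁿ` NAE-satisfies `B` if `‖B((1/2)·1 - ψ)‖_∞ ≤ 1/2`. -/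
def NAESatisfies {m n : ℕ} (B : Matrix (Fin m) (Fin n) ℝ) (ψ : Fin n → ℝ) : Prop :=
  (∀ i, ψ i = 0 ∨ ψ i = 1) ∧ ‖B.mulVec ((fun _ => (1 : ℝ) / 2) - ψ)‖ ≤ 1 / 2

/-- The linear discrepancy of a matrix. -/
noncomputable def lindisc {I J : Type*} [Fintype I] [Fintype J] (A : Matrix I J ℝ) : ℝ :=
  ⨆ w : {w : J → ℝ // ∀ j, w j ∈ Set.Icc (0 : ℝ) 1},
    ⨅ x : {x : J → ℝ // ∀ j, x j = 0 ∨ x j = 1}, ‖A.mulVec (w.1 - x.1)‖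

/-- The extended block matrix `A'` used in the `Π₂`-hardness reduction. -/
noncomputable def A'mat {m n n' : ℕ} (h : n' ≤ n) (B : Matrix (Fin m) (Fin n) ℝ) :
    Matrix ((Fin m ⊕ (Fin n ⊕ Fin n ⊕ Fin n)) ⊕ (Fin n' ⊕ Fin n'))
      ((Fin n ⊕ Fin n ⊕ Fin n) ⊕ Fin n') ℝ :=
  Matrix.of fun r c =>
    match r, c with
    | Sum.inl r, Sum.inl c => Amat B r c
    | Sum.inl _, Sum.inr _ => 0
    | Sum.inr (Sum.inl k), Sum.inl c =>
        Sum.elim (fun i => if Fin.castLE h k = i then (2 : ℝ) / 3 else 0)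
          (Sum.elim (fun i => if Fin.castLE h k = i then (2 : ℝ) / 3 else 0)
            (fun i => if Fin.castLE h k = i then (2 : ℝ) / 3 else 0)) c
    | Sum.inr (Sum.inl k), Sum.inr k' => if k = k' then -2 else 0
    | Sum.inr (Sum.inr _), Sum.inl _ => 0
    | Sum.inr (Sum.inr k), Sum.inr k' => if k = k' then 8 / 3 else 0

/-!
Test `lindisc A' < 3/2` at the point with every copy of every variable at `1/2` and
`z_k = 1/4 + (ψ_A)_k / 2`, and take a rounding `x` with `‖A'(w - x)‖_∞ < 3/2`. Every row of `A'`
then evaluates to a combination of `±1/2` terms that must avoid `±3/2`: the rows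
`[I I -I]`, `[I -I I]`, `[-I I I]` force the three copies of each variable to agree, the rows
`(8/3) I` force `z = ψ_A`, the linking rows `[⅔I ⅔I ⅔I -2I]` then force `x_i = (ψ_A)_i` for
`i < n'`, and each clause row becomes a sum of three `±1/2`, which lies in `{±1/2}` exactly when
the clause is NAE-satisfied.
-/

open Matrix

lemma exists_binary_norm_mulVec_sub_lt_of_lindisc_lt {I J : Type*} [Fintype I] [Fintype J]
    {A : Matrix I J ℝ} {c : ℝ} (hA : lindisc A < c) {w : J → ℝ}
    (hw : ∀ j, w j ∈ Set.Icc (0 : ℝ) 1) :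
    ∃ x : J → ℝ, (∀ j, x j = 0 ∨ x j = 1) ∧ ‖A *ᵥ (w - x)‖ < c := by
  obtain ⟨C, hC⟩ := (isCompact_Icc (a := (0 : J → ℝ)) (b := 1)).exists_bound_of_continuousOn
    (f := fun w => A *ᵥ w) (continuous_const.matrix_mulVec continuous_id).continuousOn
  have : Nonempty {x : J → ℝ // ∀ j, x j = 0 ∨ x j = 1} := ⟨⟨0, fun _ => Or.inl rfl⟩⟩
  -- without this bound the `⨆` in `lindisc` would be the junk value `0`
  have hbdd : BddAbove (Set.range fun w : {w : J → ℝ // ∀ j, w j ∈ Set.Icc (0 : ℝ) 1} =>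
      ⨅ x : {x : J → ℝ // ∀ j, x j = 0 ∨ x j = 1}, ‖A *ᵥ (w.1 - x.1)‖) := by
    refine ⟨C, Set.forall_mem_range.2 fun w => ?_⟩
    have hw' : w.1 ∈ Set.Icc 0 1 := ⟨fun j => (w.2 j).1, fun j => (w.2 j).2⟩
    have := ciInf_le (f := fun x : {x : J → ℝ // ∀ j, x j = 0 ∨ x j = 1} => ‖A *ᵥ (w.1 - x.1)‖)
      ⟨0, Set.forall_mem_range.2 fun _ => norm_nonneg _⟩ ⟨0, fun _ => Or.inl rfl⟩
    simp only [sub_zero] at this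
    exact this.trans (hC w.1 hw')
  obtain ⟨x, hx⟩ := exists_lt_of_ciInf_lt ((le_ciSup hbdd ⟨w, hw⟩).trans_lt hA)
  exact ⟨x.1, x.2, hx⟩

section Rows

variable {m n n' : ℕ} (h : n' ≤ n) (B : Matrix (Fin m) (Fin n) ℝ)
  (v : (Fin n ⊕ Fin n ⊕ Fin n) ⊕ Fin n' → ℝ)

open Sum

lemma A'mat_mulVec_inl_inl (j : Fin m) :
    (A'mat h B *ᵥ v) (inl (inl j)) =
      (1 / 3) * ((B *ᵥ fun i => v (inl (inl i))) j + (B *ᵥ fun i => v (inl (inr (inl i)))) j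
        + (B *ᵥ fun i => v (inl (inr (inr i)))) j) := by
  simp only [A'mat, Amat, mulVec, dotProduct, Fintype.sum_sum_type, of_apply, elim_inl, elim_inr,
    id, zero_mul, Finset.sum_const_zero, add_zero, Finset.mul_sum, mul_add, mul_assoc, add_assoc]

lemma A'mat_mulVec_inl_inr_inl (k : Fin n) :
    (A'mat h B *ᵥ v) (inl (inr (inl k))) =
      v (inl (inl k)) + v (inl (inr (inl k))) - v (inl (inr (inr k))) := by
  simp [A'mat, Amat, mulVec, dotProduct, Fintype.sum_sum_type, ite_mul]
  ring

lemma A'mat_mulVec_inl_inr_inr_inl (k : Fin n) :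
    (A'mat h B *ᵥ v) (inl (inr (inr (inl k)))) =
      v (inl (inl k)) - v (inl (inr (inl k))) + v (inl (inr (inr k))) := by
  simp [A'mat, Amat, mulVec, dotProduct, Fintype.sum_sum_type, ite_mul]
  ring

lemma A'mat_mulVec_inl_inr_inr_inr (k : Fin n) :
    (A'mat h B *ᵥ v) (inl (inr (inr (inr k)))) =
      -v (inl (inl k)) + v (inl (inr (inl k))) + v (inl (inr (inr k))) := by
  simp [A'mat, Amat, mulVec, dotProduct, Fintype.sum_sum_type, ite_mul]
  ring

lemma A'mat_mulVec_inr_inl (k : Fin n') :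
    (A'mat h B *ᵥ v) (inr (inl k)) =
      (2 / 3) * (v (inl (inl (Fin.castLE h k))) + v (inl (inr (inl (Fin.castLE h k))))
        + v (inl (inr (inr (Fin.castLE h k))))) - 2 * v (inr k) := by
  simp [A'mat, mulVec, dotProduct, Fintype.sum_sum_type, ite_mul]
  ring

lemma A'mat_mulVec_inr_inr (k : Fin n') :
    (A'mat h B *ᵥ v) (inr (inr k)) = (8 / 3) * v (inr k) := by
  simp [A'mat, mulVec, dotProduct, Fintype.sum_sum_type, ite_mul]

end Rows

lemma abs_add_add_le_half_of_abs_lt {a b c : ℝ} (ha : |a| = 1 / 2) (hb : |b| = 1 / 2)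
    (hc : |c| = 1 / 2) (h : |a + b + c| < 3 / 2) : |a + b + c| ≤ 1 / 2 := by
  rw [abs_eq (by norm_num)] at ha hb hc
  rcases ha with rfl | rfl <;> rcases hb with rfl | rfl <;> rcases hc with rfl | rfl <;>
    revert h <;> norm_num

lemma IsNAEClauseMatrix.naeSatisfies_of_abs_mulVec_lt {m n : ℕ} {B : Matrix (Fin m) (Fin n) ℝ}
    (hB : IsNAEClauseMatrix B) {ψ : Fin n → ℝ} (hψ : ∀ i, ψ i = 0 ∨ ψ i = 1)
    (h : ∀ j, |(B *ᵥ ((fun _ => 1 / 2) - ψ)) j| < 3 / 2) : NAESatisfies B ψ := by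
  obtain ⟨i1, i2, i3, b1, b2, b3, hb, hBrow⟩ := hB
  set u : Fin n → ℝ := (fun _ => 1 / 2) - ψ
  have hterm : ∀ (b : ℝ) (i : Fin n), (b = -1 ∨ b = 1) → |b * u i| = 1 / 2 := by
    intro b i hb
    have hbabs : |b| = 1 := by rcases hb with rfl | rfl <;> norm_num
    rcases hψ i with hi | hi <;> norm_num [u, abs_mul, hbabs, hi]
  refine ⟨hψ, (pi_norm_le_iff_of_nonneg (by norm_num)).2 fun j => ?_⟩
  have hrow : (B *ᵥ u) j = b1 j * u (i1 j) + b2 j * u (i2 j) + b3 j * u (i3 j) := by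
    simp [mulVec, dotProduct, hBrow, add_mul, ite_mul, Finset.sum_add_distrib]
  rw [Real.norm_eq_abs, hrow]
  exact abs_add_add_le_half_of_abs_lt (hterm _ _ (hb j).1) (hterm _ _ (hb j).2.1)
    (hterm _ _ (hb j).2.2) (hrow ▸ h j)

noncomputable def reductionPoint (n : ℕ) {n' : ℕ} (ψA : Fin n' → ℝ) :
    (Fin n ⊕ Fin n ⊕ Fin n) ⊕ Fin n' → ℝ :=
  Sum.elim (fun _ => 1 / 2) (fun k => 1 / 4 + ψA k / 2)

lemma reductionPoint_mem_Icc {n n' : ℕ} {ψA : Fin n' → ℝ} (hψA : ∀ k, ψA k = 0 ∨ ψA k = 1) :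
    ∀ j, reductionPoint n ψA j ∈ Set.Icc (0 : ℝ) 1
  | .inl _ => by norm_num [reductionPoint]
  | .inr k => by rcases hψA k with hk | hk <;> norm_num [reductionPoint, hk]

def IsCloseRounding {m n n' : ℕ} (h : n' ≤ n) (B : Matrix (Fin m) (Fin n) ℝ)
    (ψA : Fin n' → ℝ) (x : (Fin n ⊕ Fin n ⊕ Fin n) ⊕ Fin n' → ℝ) : Prop :=
  (∀ j, x j = 0 ∨ x j = 1) ∧ ∀ r, |(A'mat h B *ᵥ (reductionPoint n ψA - x)) r| < 3 / 2

namespace IsCloseRounding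

open Sum

variable {m n n' : ℕ} {h : n' ≤ n} {B : Matrix (Fin m) (Fin n) ℝ} {ψA : Fin n' → ℝ}
  {x : (Fin n ⊕ Fin n ⊕ Fin n) ⊕ Fin n' → ℝ}

lemma copies_eq (hx : IsCloseRounding h B ψA x) (i : Fin n) :
    x (inl (inr (inl i))) = x (inl (inl i)) ∧ x (inl (inr (inr i))) = x (inl (inl i)) := by
  have h₁ := hx.2 (inl (inr (inl i)))
  have h₂ := hx.2 (inl (inr (inr (inl i))))
  have h₃ := hx.2 (inl (inr (inr (inr i))))
  rw [A'mat_mulVec_inl_inr_inl] at h₁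
  rw [A'mat_mulVec_inl_inr_inr_inl] at h₂
  rw [A'mat_mulVec_inl_inr_inr_inr] at h₃
  simp only [Pi.sub_apply, reductionPoint, elim_inl] at h₁ h₂ h₃
  rcases hx.1 (inl (inl i)) with e₁ | e₁ <;> rcases hx.1 (inl (inr (inl i))) with e₂ | e₂ <;>
    rcases hx.1 (inl (inr (inr i))) with e₃ | e₃ <;>
    revert h₁ h₂ h₃ <;> norm_num [e₁, e₂, e₃, abs_lt]

lemma inr_eq (hx : IsCloseRounding h B ψA x) (hψA : ∀ k, ψA k = 0 ∨ ψA k = 1) (k : Fin n') :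
    x (inr k) = ψA k := by
  have hk := hx.2 (inr (inr k))
  rw [A'mat_mulVec_inr_inr] at hk
  simp only [Pi.sub_apply, reductionPoint, elim_inr] at hk
  rcases hx.1 (inr k) with e | e <;> rcases hψA k with e' | e' <;>
    revert hk <;> norm_num [e, e', abs_lt]

lemma castLE_eq (hx : IsCloseRounding h B ψA x) (hψA : ∀ k, ψA k = 0 ∨ ψA k = 1) (k : Fin n') :
    x (inl (inl (Fin.castLE h k))) = ψA k := by
  have hk := hx.2 (inr (inl k))
  rw [A'mat_mulVec_inr_inl] at hk
  simp only [Pi.sub_apply, reductionPoint, elim_inl, elim_inr, (hx.copies_eq _).1,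
    (hx.copies_eq _).2, hx.inr_eq hψA] at hk
  rcases hx.1 (inl (inl (Fin.castLE h k))) with e | e <;> rcases hψA k with e' | e' <;>
    revert hk <;> norm_num [e, e', abs_lt]

lemma abs_mulVec_lt (hx : IsCloseRounding h B ψA x) (j : Fin m) :
    |(B *ᵥ ((fun _ => 1 / 2) - fun i => x (inl (inl i)))) j| < 3 / 2 := by
  have hj := hx.2 (inl (inl j))
  rw [A'mat_mulVec_inl_inl] at hj
  simp only [Pi.sub_apply, reductionPoint, elim_inl, (hx.copies_eq _).1,
    (hx.copies_eq _).2] at hj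
  rwa [show ∀ a : ℝ, 1 / 3 * (a + a + a) = a by intro; ring] at hj

end IsCloseRounding

/-- Soundness of the `Π₂`-hardness reduction: if `lindisc(A') < 3/2`, then every assignment
`ψ_A` to the first `n'` variables extends to a NAE-satisfying assignment of `B`. -/
theorem pi2_reduction_soundness {m n n' : ℕ} (h : n' ≤ n)
    (B : Matrix (Fin m) (Fin n) ℝ) (hB : IsNAEClauseMatrix B)
    (hlin : lindisc (A'mat h B) < 3 / 2) :
    ∀ ψA : Fin n' → ℝ, (∀ i, ψA i = 0 ∨ ψA i = 1) →
      ∃ ψ : Fin n → ℝ, (∀ i : Fin n', ψ (Fin.castLE h i) = ψA i) ∧ NAESatisfies B ψ := by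
  intro ψA hψA
  obtain ⟨x, hx01, hx⟩ :=
    exists_binary_norm_mulVec_sub_lt_of_lindisc_lt hlin (reductionPoint_mem_Icc (n := n) hψA)
  have hclose : IsCloseRounding h B ψA x := ⟨hx01, fun r => (norm_le_pi_norm _ r).trans_lt hx⟩
  exact ⟨fun i => x (.inl (.inl i)), hclose.castLE_eq hψA,
    hB.naeSatisfies_of_abs_mulVec_lt (fun _ => hx01 _) hclose.abs_mulVec_lt⟩
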